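/- The group Γ(2)/{±I} is generated by the transformations τ ↦ τ + 2 and τ ↦ τ/(2τ + 1), and is a free group of rank 2. -/

import Mathlib

/-!
`Γ(2)` is generated by `T²`, `S₂` and `-1`: reducing `a` modulo `2c` by powers of `T²` and then
`c` modulo `2a` by powers of `S₂` strictly decreases `|c|` (the first reduction is strict because
`a` is odd and `c` is even), until `c = 0` and the matrix is `±T²ᵏ`.

Freeness is ping-pong on `ℍ`, on which `SL(2,ℤ)/{±1}` acts. `T²` translates `Re z` by `2` and
`S₂` translates `Re (1/z)` by `2`, so the sets `{±Re z ≥ 1}` and `{±Re (1/z) ≥ 1}` work, the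
latter two lying in the strip `|Re z| < 1`.
-/

open Matrix MatrixGroups

/-- `Γ(2)`, the kernel of reduction mod 2 on `SL(2,ℤ)`. -/
def GammaTwo : Subgroup SL(2, ℤ) :=
  (Matrix.SpecialLinearGroup.map (Int.castRingHom (ZMod 2))).ker

/-- The matrix `T² = [[1,2],[0,1]]`. -/
def Tsq : SL(2, ℤ) := ⟨!![1, 2; 0, 1], by norm_num [Matrix.det_fin_two_of]⟩

/-- The matrix `S₂ = [[1,0],[2,1]]`. -/
def Stwo : SL(2, ℤ) := ⟨!![1, 0; 2, 1], by norm_num [Matrix.det_fin_two_of]⟩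

open UpperHalfPlane ModularGroup Matrix.SpecialLinearGroup Pointwise

local notation "π" => QuotientGroup.mk' (Subgroup.center SL(2, ℤ))

lemma mem_gammaTwo_iff {A : SL(2, ℤ)} :
    A ∈ GammaTwo ↔ Odd (A 0 0) ∧ Even (A 0 1) ∧ Even (A 1 0) ∧ Odd (A 1 1) := by
  simp only [← ZMod.intCast_eq_one_iff_odd, ← ZMod.intCast_eq_zero_iff_even]
  exact CongruenceSubgroup.Gamma_mem

lemma Tsq_mem_gammaTwo : Tsq ∈ GammaTwo := by
  rw [GammaTwo, MonoidHom.mem_ker]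
  decide

lemma Stwo_mem_gammaTwo : Stwo ∈ GammaTwo := by
  rw [GammaTwo, MonoidHom.mem_ker]
  decide

lemma Tsq_eq_T_sq : Tsq = T ^ 2 := by decide

lemma Stwo_eq_conj_Tsq_inv : Stwo = S * Tsq⁻¹ * S⁻¹ := by decide

lemma coe_Tsq_zpow (n : ℤ) : (Tsq ^ n).1 = !![1, 2 * n; 0, 1] := by
  rw [Tsq_eq_T_sq, ← zpow_natCast, ← _root_.zpow_mul, coe_T_zpow]
  norm_num

lemma coe_Stwo_zpow (n : ℤ) : (Stwo ^ n).1 = !![1, 0; 2 * n, 1] := by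
  rw [Stwo_eq_conj_Tsq_inv, conj_zpow, _root_.inv_zpow', coe_mul, coe_mul, coe_Tsq_zpow, S_inv]
  simp

lemma Tsq_zpow_mul_apply_zero_zero (n : ℤ) (A : SL(2, ℤ)) :
    (Tsq ^ n * A) 0 0 = A 0 0 + 2 * n * A 1 0 := by
  simp [coe_Tsq_zpow, Matrix.mul_apply, Fin.sum_univ_two]

lemma Tsq_zpow_mul_apply_one_zero (n : ℤ) (A : SL(2, ℤ)) : (Tsq ^ n * A) 1 0 = A 1 0 := by
  simp [coe_Tsq_zpow, Matrix.mul_apply, Fin.sum_univ_two]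

lemma Stwo_zpow_mul_apply_one_zero (n : ℤ) (A : SL(2, ℤ)) :
    (Stwo ^ n * A) 1 0 = A 1 0 + 2 * n * A 0 0 := by
  simp only [coe_mul, coe_Stwo_zpow, Matrix.mul_apply, Fin.sum_univ_two, of_apply, cons_val',
    cons_val_zero, cons_val_one, cons_val_fin_one, one_mul]
  ring

lemma eq_Tsq_zpow {A : SL(2, ℤ)} {k : ℤ} (ha : A 0 0 = 1) (hb : A 0 1 = 2 * k) (hc : A 1 0 = 0) :
    A = Tsq ^ k := by
  have hdet := A.2
  rw [Matrix.det_fin_two, ha, hc] at hdet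
  have hd : A 1 1 = 1 := by linarith
  ext i j
  fin_cases i <;> fin_cases j <;> simp [coe_Tsq_zpow, ha, hb, hc, hd]

lemma exists_natAbs_add_two_mul_mul_le (x y : ℤ) (hy : y ≠ 0) :
    ∃ n : ℤ, (x + 2 * n * y).natAbs ≤ y.natAbs := by
  have h2y : 2 * y ≠ 0 := mul_ne_zero two_ne_zero hy
  have hr₀ := Int.emod_nonneg (x + y.natAbs) h2y
  have hr₁ := Int.emod_lt (x + y.natAbs) h2y
  have hq := Int.mul_ediv_add_emod (x + y.natAbs) (2 * y)
  -- `x + 2ny` becomes the remainder of `x + |y|` modulo `2y`, shifted down by `|y|`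
  refine ⟨-((x + y.natAbs) / (2 * y)), ?_⟩
  have key : x + 2 * -((x + y.natAbs) / (2 * y)) * y = (x + y.natAbs) % (2 * y) - y.natAbs := by
    linarith
  rw [key]
  omega

lemma mem_closure_of_apply_one_zero_eq_zero {A : SL(2, ℤ)} (hA : A ∈ GammaTwo) (hc : A 1 0 = 0) :
    A ∈ Subgroup.closure {-1, Tsq, Stwo} := by
  have hT : Tsq ∈ Subgroup.closure {-1, Tsq, Stwo} := Subgroup.subset_closure (by simp)
  obtain ⟨-, ⟨k, hb⟩, -, -⟩ := mem_gammaTwo_iff.1 hA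
  have had := A.2
  rw [Matrix.det_fin_two, hc, mul_zero, sub_zero] at had
  rcases Int.eq_one_or_neg_one_of_mul_eq_one had with ha | ha
  · rw [eq_Tsq_zpow ha (k := k) (by omega) hc]
    exact zpow_mem hT k
  · have hneg : -A = Tsq ^ (-k) := eq_Tsq_zpow (by simp [ha]) (by simp only [coe_neg, Matrix.neg_apply, hb]; ring) (by simp [hc])
    rw [← neg_neg A, hneg, ← neg_one_mul (Tsq ^ (-k))]
    exact mul_mem (Subgroup.subset_closure (Set.mem_insert _ _)) (zpow_mem hT _)

theorem gammaTwo_le_closure : GammaTwo ≤ Subgroup.closure {-1, Tsq, Stwo} := by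
  have hT : Tsq ∈ Subgroup.closure {-1, Tsq, Stwo} := Subgroup.subset_closure (by simp)
  have hS : Stwo ∈ Subgroup.closure {-1, Tsq, Stwo} := Subgroup.subset_closure (by simp)
  intro A hA
  induction hn : (A 1 0).natAbs using Nat.strong_induction_on generalizing A with
  | _ n ih =>
  rcases eq_or_ne (A 1 0) 0 with hc | hc
  · exact mem_closure_of_apply_one_zero_eq_zero hA hc
  obtain ⟨p, hp⟩ := exists_natAbs_add_two_mul_mul_le (A 0 0) (A 1 0) hc
  set B := Tsq ^ p * A with hB
  have hBΓ : B ∈ GammaTwo := mul_mem (zpow_mem Tsq_mem_gammaTwo p) hA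
  obtain ⟨hBa, -, hBc, -⟩ := mem_gammaTwo_iff.1 hBΓ
  rw [Tsq_zpow_mul_apply_one_zero] at hBc
  rw [← Tsq_zpow_mul_apply_zero_zero, ← hB] at hp
  rw [Int.odd_iff] at hBa
  rw [Int.even_iff] at hBc
  -- an odd number and an even one cannot have the same absolute value
  have hBlt : (B 0 0).natAbs < n := by omega
  obtain ⟨q, hq⟩ := exists_natAbs_add_two_mul_mul_le (B 1 0) (B 0 0) (by omega)
  have hC : Stwo ^ q * B ∈ Subgroup.closure {-1, Tsq, Stwo} := by
    refine ih _ ?_ (mul_mem (zpow_mem Stwo_mem_gammaTwo q) hBΓ) rfl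
    rw [Stwo_zpow_mul_apply_one_zero]
    exact hq.trans_lt hBlt
  rwa [Subgroup.mul_mem_cancel_left _ (zpow_mem hS q), hB,
    Subgroup.mul_mem_cancel_left _ (zpow_mem hT p)] at hC

lemma map_gammaTwo_eq_closure : GammaTwo.map π = Subgroup.closure {π Tsq, π Stwo} := by
  have hneg : π (-1) = 1 :=
    (QuotientGroup.eq_one_iff _).2 (Subgroup.mem_center_iff.2 fun g ↦ by simp)
  refine le_antisymm ?_ ?_
  · calc GammaTwo.map π ≤ (Subgroup.closure {-1, Tsq, Stwo}).map π :=
          Subgroup.map_mono gammaTwo_le_closure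
      _ = Subgroup.closure {π Tsq, π Stwo} := by
          rw [MonoidHom.map_closure, Set.image_insert_eq, Set.image_pair, hneg,
            Subgroup.closure_insert_one]
  · rw [Subgroup.closure_le]
    rintro _ (rfl | rfl)
    · exact Subgroup.mem_map_of_mem _ Tsq_mem_gammaTwo
    · exact Subgroup.mem_map_of_mem _ Stwo_mem_gammaTwo

lemma smul_eq_self_of_mem_center {g : SL(2, ℤ)} (hg : g ∈ Subgroup.center SL(2, ℤ)) (z : ℍ) :
    g • z = z := by
  obtain ⟨r, hr, hg⟩ := Matrix.SpecialLinearGroup.mem_center_iff.1 hg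
  rcases (by simpa using hr : r = 1 ∨ r = -1) with rfl | rfl
  · rw [show g = 1 from Subtype.ext (by simpa using hg.symm), one_smul]
  · rw [show g = -1 from Subtype.ext (by simpa using hg.symm), SL_neg_smul, one_smul]

noncomputable instance : MulAction (SL(2, ℤ) ⧸ Subgroup.center SL(2, ℤ)) ℍ :=
  MulAction.compHom ℍ <| QuotientGroup.lift _ (MulAction.toPermHom SL(2, ℤ) ℍ) fun _ hg ↦
    Equiv.ext (smul_eq_self_of_mem_center hg)

lemma re_Tsq_smul (z : ℍ) : (Tsq • z).re = z.re + 2 := by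
  rw [Tsq_eq_T_sq, ← zpow_natCast, re_T_zpow_smul]
  norm_num

lemma coe_Stwo_smul (z : ℍ) : ((Stwo • z : ℍ) : ℂ) = z / (2 * z + 1) := by
  rw [specialLinearGroup_apply]
  simp [Stwo]

lemma coe_Stwo_smul_inv (z : ℍ) : ((Stwo • z : ℍ) : ℂ)⁻¹ = (z : ℂ)⁻¹ + 2 := by
  rw [coe_Stwo_smul, inv_div, add_div, mul_div_cancel_right₀ _ (ne_zero z), one_div, add_comm]

lemma abs_re_lt_one_of_one_le_abs_re_inv {z : ℍ} (h : 1 ≤ |(z : ℂ)⁻¹.re|) : |z.re| < 1 := by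
  have hn : 0 < Complex.normSq (z : ℂ) := Complex.normSq_pos.2 (ne_zero z)
  rw [Complex.inv_re, abs_div, abs_of_pos hn, one_le_div hn, Complex.normSq_apply] at h
  have := z.im_pos
  simp only [coe_re, coe_im] at h
  nlinarith [abs_mul_abs_self z.re, abs_nonneg z.re]

section PingPong

variable {G α : Type*} [Group G] [MulAction G α] {g : G} {φ : α → ℝ}

lemma smul_compl_setOf_le_neg_one_subset (hg : ∀ x, φ (g • x) = φ x + 2) :
    g • {x | φ x ≤ -1}ᶜ ⊆ {x | 1 ≤ φ x} := by
  rintro _ ⟨x, hx, rfl⟩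
  simp only [Set.mem_compl_iff, Set.mem_ofPred_eq, not_le, hg] at hx ⊢
  linarith

lemma inv_smul_compl_setOf_one_le_subset (hg : ∀ x, φ (g • x) = φ x + 2) :
    g⁻¹ • {x | 1 ≤ φ x}ᶜ ⊆ {x | φ x ≤ -1} := by
  rintro _ ⟨x, hx, rfl⟩
  have := hg (g⁻¹ • x)
  rw [smul_inv_smul] at this
  simp only [Set.mem_compl_iff, Set.mem_ofPred_eq, not_le] at hx ⊢
  linarith

end PingPong

noncomputable def pingPongCoord : Fin 2 → ℍ → ℝ := ![fun z ↦ z.re, fun z ↦ (z : ℂ)⁻¹.re]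

lemma pingPongCoord_smul (i : Fin 2) (z : ℍ) :
    pingPongCoord i (![π Tsq, π Stwo] i • z) = pingPongCoord i z + 2 := by
  fin_cases i
  · exact re_Tsq_smul z
  · show ((Stwo • z : ℍ) : ℂ)⁻¹.re = (z : ℂ)⁻¹.re + 2
    rw [coe_Stwo_smul_inv, Complex.add_re]
    norm_num

lemma disjoint_one_le_abs_pingPongCoord {i j : Fin 2} (hij : i ≠ j) :
    Disjoint {z | 1 ≤ |pingPongCoord i z|} {z | 1 ≤ |pingPongCoord j z|} := by
  fin_cases i <;> fin_cases j <;> simp only [ne_eq, not_true_eq_false] at hij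
  · exact Set.disjoint_right.2 fun z h ↦ (abs_re_lt_one_of_one_le_abs_re_inv h).not_ge
  · exact Set.disjoint_left.2 fun z h ↦ (abs_re_lt_one_of_one_le_abs_re_inv h).not_ge

lemma injective_lift_Tsq_Stwo : Function.Injective (FreeGroup.lift ![π Tsq, π Stwo]) := by
  have hX i : {z | 1 ≤ pingPongCoord i z} ⊆ {z | 1 ≤ |pingPongCoord i z|} :=
    fun z (h : 1 ≤ pingPongCoord i z) ↦ h.trans (le_abs_self _)
  have hY i : {z | pingPongCoord i z ≤ -1} ⊆ {z | 1 ≤ |pingPongCoord i z|} :=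
    fun z (h : pingPongCoord i z ≤ -1) ↦ le_abs'.2 (Or.inl h)
  apply FreeGroup.injective_lift_of_ping_pong _ (fun i ↦ {z | 1 ≤ pingPongCoord i z})
    (fun i ↦ {z | pingPongCoord i z ≤ -1})
  · intro i
    have hI : I ∈ {z | pingPongCoord i z ≤ -1}ᶜ := by fin_cases i <;> simp [pingPongCoord]
    exact (Set.nonempty_of_mem hI).smul_set.mono
      (smul_compl_setOf_le_neg_one_subset (pingPongCoord_smul i))
  · exact fun i j hij ↦ (disjoint_one_le_abs_pingPongCoord hij).mono (hX i) (hX j)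
  · exact fun i j hij ↦ (disjoint_one_le_abs_pingPongCoord hij).mono (hY i) (hY j)
  · intro i j
    rcases eq_or_ne i j with rfl | hij
    · exact Set.disjoint_left.2 fun z h₁ h₂ ↦ by simp only [Set.mem_ofPred_eq] at h₁ h₂; linarith
    · exact (disjoint_one_le_abs_pingPongCoord hij).mono (hX i) (hY j)
  · exact fun i ↦ smul_compl_setOf_le_neg_one_subset (pingPongCoord_smul i)
  · exact fun i ↦ inv_smul_compl_setOf_one_le_subset (pingPongCoord_smul i)

/-- The image of `Γ(2)` in `PSL(2,ℤ) = SL(2,ℤ)/{±I}` is generated by the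
classes of `τ ↦ τ + 2` and `τ ↦ τ/(2τ+1)`, and is a free group of rank 2. -/
theorem GammaTwo_mod_center_free_of_rank_two :
    Subgroup.map (QuotientGroup.mk' (Subgroup.center SL(2, ℤ))) GammaTwo =
      Subgroup.closure {QuotientGroup.mk' (Subgroup.center SL(2, ℤ)) Tsq,
                        QuotientGroup.mk' (Subgroup.center SL(2, ℤ)) Stwo} ∧
    Nonempty
      ((Subgroup.map (QuotientGroup.mk' (Subgroup.center SL(2, ℤ))) GammaTwo) ≃*
        FreeGroup (Fin 2)) := by
  have hrange : (FreeGroup.lift ![π Tsq, π Stwo]).range = Subgroup.closure {π Tsq, π Stwo} := by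
    rw [FreeGroup.range_lift_eq_closure, Matrix.range_cons_cons_empty]
  refine ⟨map_gammaTwo_eq_closure, ⟨?_⟩⟩
  exact (MulEquiv.subgroupCongr (map_gammaTwo_eq_closure.trans hrange.symm)).trans
    (MonoidHom.ofInjective injective_lift_Tsq_Stwo).symm
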